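/- Let m be a positive integer. For every positive integer n with n > (L_{2m} + L_{2m}² − 5)³, if σ₂(n) − n² = L_{2m}·n − L_{2m}² + 5 (as integers), then either there exists an integer k ≥ 0 such that n = L_{2k} · L_{2k+2m} with both L_{2k} and L_{2k+2m} prime, or there exists an integer k with 0 ≤ k < m and m ≠ 2k such that n = L_{2k} · L_{2m−2k} with both L_{2k} and L_{2m−2k} prime. -/
import Mathlib


/-- The Lucas numbers: `L 0 = 2`, `L 1 = 1`, `L (n+2) = L (n+1) + L n`. -/
def lucasNum : ℕ → ℕ
  | 0 => 2
  | 1 => 1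
  | n + 2 => lucasNum (n + 1) + lucasNum n

def Fz (n : ℕ) : ℤ := Nat.fib n
def Lz (n : ℕ) : ℤ := lucasNum n

lemma Fz0 : Fz 0 = 0 := rfl
lemma Fz1 : Fz 1 = 1 := rfl
lemma Fz_add_two (n : ℕ) : Fz (n+2) = Fz (n+1) + Fz n := by
  unfold Fz; rw [Nat.fib_add_two]; push_cast; ring
lemma Lz0 : Lz 0 = 2 := rfl
lemma Lz1 : Lz 1 = 1 := rfl
lemma Lz_add_two (n : ℕ) : Lz (n+2) = Lz (n+1) + Lz n := by
  unfold Lz; show ((lucasNum (n+1) + lucasNum n : ℕ) : ℤ) = _; push_cast; ring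

lemma lucas_pos (n : ℕ) : 0 < lucasNum n := by
  induction n using Nat.twoStepInduction with
  | zero => decide
  | one => decide
  | more n ih1 ih2 => show 0 < lucasNum (n+1) + lucasNum n; omega

lemma Fz_nonneg (n : ℕ) : 0 ≤ Fz n := Int.natCast_nonneg _
lemma Lz_pos (n : ℕ) : 0 < Lz n := by unfold Lz; exact_mod_cast lucas_pos n

lemma Lz_cast_inj {a n : ℕ} (h : (a:ℤ) = Lz n) : a = lucasNum n := by
  unfold Lz at h; exact_mod_cast h

lemma B1 (n : ℕ) : 2 * Fz (n+1) = Lz n + Fz n := by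
  induction n using Nat.twoStepInduction with
  | zero => decide
  | one => decide
  | more n ih1 ih2 =>
    have g1 : Fz (n+2+1) = Fz (n+1+1) + Fz (n+1) := Fz_add_two (n+1)
    have g2 : Lz (n+2) = Lz (n+1) + Lz n := Lz_add_two n
    have g3 : Fz (n+2) = Fz (n+1) + Fz n := Fz_add_two n
    linear_combination 2*g1 - g2 - g3 + ih1 + ih2

lemma B2 (n : ℕ) : 2 * Lz (n+1) = Lz n + 5 * Fz n := by
  have h1 := B1 (n+1)
  have h2 := B1 n
  have h3 := Fz_add_two n
  linear_combination -2*h1 + 4*h3 + h2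

lemma lucasNum_add_two (n : ℕ) : lucasNum (n+2) = lucasNum (n+1) + lucasNum n := rfl

lemma E2 (a : ℕ) : ∀ b : ℕ, 2 * Fz (a+b) = Lz a * Fz b + Fz a * Lz b := by
  intro b
  induction b using Nat.twoStepInduction with
  | zero => rw [Nat.add_zero, Fz0, Lz0]; ring
  | one => rw [Fz1, Lz1]; linear_combination B1 a
  | more b ih1 ih2 =>
    have g1 : Fz (a+(b+2)) = Fz (a+(b+1)) + Fz (a+b) := Fz_add_two (a+b)
    have g3 : Fz (b+2) = Fz (b+1) + Fz b := Fz_add_two b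
    have g4 : Lz (b+2) = Lz (b+1) + Lz b := Lz_add_two b
    linear_combination 2*g1 - Lz a * g3 - Fz a * g4 + ih2 + ih1

lemma E1 (a : ℕ) : ∀ b : ℕ, 2 * Lz (a+b) = Lz a * Lz b + 5 * Fz a * Fz b := by
  intro b
  induction b using Nat.twoStepInduction with
  | zero => rw [Nat.add_zero, Fz0, Lz0]; ring
  | one => rw [Fz1, Lz1]; linear_combination B2 a
  | more b ih1 ih2 =>
    have g1 : Lz (a+(b+2)) = Lz (a+(b+1)) + Lz (a+b) := Lz_add_two (a+b)
    have g3 : Fz (b+2) = Fz (b+1) + Fz b := Fz_add_two b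
    have g4 : Lz (b+2) = Lz (b+1) + Lz b := Lz_add_two b
    linear_combination 2*g1 - Lz a * g4 - 5 * Fz a * g3 + ih2 + ih1

lemma E3aux : ∀ n : ℕ, (Lz n^2 - 5*Fz n^2 = 4*(-1)^n) ∧
    (Lz (n+1)^2 - 5*Fz (n+1)^2 = 4*(-1)^(n+1)) ∧
    (Lz (n+1)*Lz n - 5*Fz (n+1)*Fz n = 2*(-1)^n) := by
  intro n
  induction n with
  | zero => refine ⟨?_, ?_, ?_⟩ <;> norm_num [Fz0, Fz1, Lz0, Lz1]
  | succ n ih =>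
    obtain ⟨P0, P1, Q0⟩ := ih
    have g : Lz (n+1+1) = Lz (n+1) + Lz n := Lz_add_two n
    have gf : Fz (n+1+1) = Fz (n+1) + Fz n := Fz_add_two n
    refine ⟨P1, ?_, ?_⟩
    · linear_combination (Lz (n+1+1) + Lz (n+1) + Lz n) * g -
        5*(Fz (n+1+1) + Fz (n+1) + Fz n) * gf + P1 + P0 + 2*Q0
    · linear_combination Lz (n+1) * g - 5 * Fz (n+1) * gf + P1 + Q0

lemma E3 (n : ℕ) : Lz n^2 - 5*Fz n^2 = 4*(-1)^n := (E3aux n).1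

lemma E5 (d k : ℕ) : Lz (d+k) * Lz k - 5 * Fz (d+k) * Fz k = 2*(-1)^k * Lz d := by
  have h1 := E1 d k
  have h2 := E2 d k
  have h3 := E3 k
  refine mul_left_cancel₀ (two_ne_zero (α := ℤ)) ?_
  linear_combination Lz k * h1 - 5 * Fz k * h2 + Lz d * h3

lemma E4 (d k : ℕ) : Lz (d+k) * Lz k = Lz (d+2*k) + (-1)^k * Lz d := by
  have h1 := E1 (d+k) k
  rw [show d+k+k = d+2*k from by ring] at h1
  have h5 := E5 d k
  refine mul_left_cancel₀ (two_ne_zero (α := ℤ)) ?_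
  linear_combination h5 - h1

lemma neg_one_pow_even (j : ℕ) : ((-1:ℤ))^(2*j) = 1 := by
  rw [pow_mul]; norm_num

lemma E4e (d j : ℕ) : Lz (d + 2*j) * Lz (2*j) = Lz (d + 4*j) + Lz d := by
  have h := E4 d (2*j)
  rw [show d+2*(2*j) = d+4*j from by ring, neg_one_pow_even, one_mul] at h
  exact h

lemma E5e (d j : ℕ) : Lz (d + 2*j) * Lz (2*j) - 5 * Fz (d + 2*j) * Fz (2*j) = 2 * Lz d := by
  have h := E5 d (2*j)
  rw [neg_one_pow_even] at h
  linarith [h]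

lemma E3e (j : ℕ) : Lz (2*j)^2 - 5*Fz (2*j)^2 = 4 := by
  have h := E3 (2*j)
  rw [neg_one_pow_even] at h
  linarith [h]

lemma B1' (n : ℕ) : 2*Fz (n+2) = Lz n + 3*Fz n := by
  linear_combination 2 * Fz_add_two n + B1 n

lemma B2' (n : ℕ) : 2*Lz (n+2) = 3*Lz n + 5*Fz n := by
  linear_combination 2 * Lz_add_two n + B2 n

lemma lucas_even_strictmono {i j : ℕ} (h : i < j) : lucasNum (2*i) < lucasNum (2*j) := by
  induction j, h using Nat.le_induction with
  | base =>
    rw [show 2*(i+1) = 2*i+2 from by ring, lucasNum_add_two]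
    have := lucas_pos (2*i+1)
    omega
  | succ j hj ih =>
    rw [show 2*(j+1) = 2*j+2 from by ring, lucasNum_add_two]
    have := lucas_pos (2*j+1)
    omega

lemma luc_even_le {i j : ℕ} (h : lucasNum (2*i) ≤ lucasNum (2*j)) : i ≤ j := by
  by_contra hc
  push_neg at hc
  have := lucas_even_strictmono hc
  omega

lemma luc_even_inj {i j : ℕ} (h : lucasNum (2*i) = lucasNum (2*j)) : i = j :=
  le_antisymm (luc_even_le h.le) (luc_even_le h.ge)

lemma lucas_ge3 : ∀ n : ℕ, 3 ≤ lucasNum (n+2) := by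
  intro n
  induction n using Nat.twoStepInduction with
  | zero => decide
  | one => decide
  | more n ih1 ih2 =>
    rw [lucasNum_add_two]
    have e : n+1+2 = n+2+1 := by omega
    rw [e] at ih2
    have := lucas_pos (n+2)
    omega

lemma lucas_even_ge3 {m : ℕ} (hm : 1 ≤ m) : 3 ≤ lucasNum (2*m) := by
  have e : 2*m = (2*m-2)+2 := by omega
  rw [e]; exact lucas_ge3 _

lemma pell_lucas : ∀ u : ℕ, ∀ x : ℕ, (x:ℤ)^2 = 5*(u:ℤ)^2 + 4 →
    ∃ k : ℕ, (x:ℤ) = Lz (2*k) ∧ (u:ℤ) = Fz (2*k) := by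
  intro u
  induction u using Nat.strong_induction_on with
  | _ u IH =>
    intro x hx
    rcases Nat.lt_or_ge u 2 with hu2 | hu2
    · interval_cases u
      · -- u = 0 : x² = 4
        have h4 : ((x:ℤ)-2)*((x:ℤ)+2) = 0 := by linear_combination hx
        rcases mul_eq_zero.mp h4 with h | h
        · refine ⟨0, ?_, by norm_num [Fz0]⟩
          have h0 : Lz (2*0) = 2 := rfl
          rw [h0]; linarith
        · have : (0:ℤ) ≤ (x:ℤ) := Int.natCast_nonneg x
          linarith
      · -- u = 1 : x² = 9
        have h4 : ((x:ℤ)-3)*((x:ℤ)+3) = 0 := by linear_combination hx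
        rcases mul_eq_zero.mp h4 with h | h
        · refine ⟨1, ?_, ?_⟩
          · have : Lz 2 = 3 := rfl
            rw [show 2*1 = 2 from rfl, this]; linarith
          · have : Fz 2 = 1 := rfl
            rw [show 2*1 = 2 from rfl, this]; norm_num
        · have : (0:ℤ) ≤ (x:ℤ) := Int.natCast_nonneg x
          linarith
    · -- u ≥ 2
      have hxu : 2*u < x := by
        by_contra hc
        push_neg at hc
        have : (x:ℤ) ≤ 2*u := by exact_mod_cast hc
        nlinarith [hx, Int.natCast_nonneg u]
      have hxu3 : x < 3*u := by
        by_contra hc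
        push_neg at hc
        have : (3*(u:ℤ)) ≤ x := by exact_mod_cast hc
        nlinarith [hx, (by exact_mod_cast hu2 : (2:ℤ) ≤ u)]
      -- parity
      have hpar : 2 ∣ x + u := by
        have h2 : (2:ℤ) ∣ ((x:ℤ)+u)^2 := ⟨3*(u:ℤ)^2 + 2 + x*u, by linear_combination hx⟩
        have h2' : (2:ℤ) ∣ ((x:ℤ)+u) := (Int.prime_two.dvd_of_dvd_pow h2)
        have : ((2:ℕ):ℤ) ∣ ((x+u : ℕ) : ℤ) := by push_cast; exact_mod_cast h2'
        exact_mod_cast this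
      obtain ⟨x', hX⟩ : ∃ X, 3*x = 5*u + 2*X := ⟨(3*x - 5*u)/2, by omega⟩
      obtain ⟨u', hU⟩ : ∃ U, 3*u = x + 2*U := ⟨(3*u - x)/2, by omega⟩
      have h2x' : ((x':ℕ):ℤ)*2 = 3*(x:ℤ) - 5*u := by
        have : ((3*x:ℕ):ℤ) = ((5*u + 2*x' : ℕ):ℤ) := by rw [hX]
        push_cast at this
        linarith
      have h2u' : ((u':ℕ):ℤ)*2 = 3*(u:ℤ) - (x:ℤ) := by
        have : ((3*u:ℕ):ℤ) = ((x + 2*u' : ℕ):ℤ) := by rw [hU]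
        push_cast at this
        linarith
      have hu'lt : u' < u := by omega
      have hx'eq : ((x':ℕ):ℤ)^2 = 5*((u':ℕ):ℤ)^2 + 4 := by
        have H : (((x':ℕ):ℤ)*2)^2 = 5*(((u':ℕ):ℤ)*2)^2 + 16 := by
          rw [h2x', h2u']; linear_combination 4*hx
        nlinarith [H]
      obtain ⟨k, hk1, hk2⟩ := IH u' hu'lt x' hx'eq
      refine ⟨k+1, ?_, ?_⟩
      · have hb := B2' (2*k)
        rw [show 2*(k+1) = 2*k+2 from by ring]
        have : 2*(x:ℤ) = 3*((x':ℕ):ℤ) + 5*((u':ℕ):ℤ) := by linarith [h2x', h2u']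
        rw [hk1, hk2] at this
        linarith [hb, this]
      · have hb := B1' (2*k)
        rw [show 2*(k+1) = 2*k+2 from by ring]
        have : 2*(u:ℤ) = ((x':ℕ):ℤ) + 3*((u':ℕ):ℤ) := by linarith [h2x', h2u']
        rw [hk1, hk2] at this
        linarith [hb, this]

lemma descent (m : ℕ) (hm : 1 ≤ m) : ∀ y : ℕ, ∀ x : ℕ, 0 < x → x ≤ y →
    (x:ℤ)^2 + (y:ℤ)^2 - Lz (2*m) * x * y + Lz (2*m)^2 - 4 = 0 →
    (∃ k : ℕ, (x:ℤ) = Lz (2*k) ∧ (y:ℤ) = Lz (2*k + 2*m)) ∨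
    (∃ k : ℕ, 2*k ≤ m ∧ (x:ℤ) = Lz (2*k) ∧ (y:ℤ) = Lz (2*m - 2*k)) := by
  intro y
  induction y using Nat.strong_induction_on with
  | _ y IH =>
    intro x hx hxy heq
    have hL3 : (3:ℤ) ≤ Lz (2*m) := by
      unfold Lz; exact_mod_cast lucas_even_ge3 hm
    have hL9 : (9:ℤ) ≤ Lz (2*m)^2 := by nlinarith
    have hy : 0 < y := lt_of_lt_of_le hx hxy
    have hx1 : (1:ℤ) ≤ x := by exact_mod_cast hx
    have hy1 : (1:ℤ) ≤ y := by exact_mod_cast hy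
    have hxy' : (x:ℤ) ≤ y := by exact_mod_cast hxy
    have hx2sq : (1:ℤ) ≤ (x:ℤ)^2 := by nlinarith
    have hzprod : (Lz (2*m)*x - y) * y = (x:ℤ)^2 + Lz (2*m)^2 - 4 := by
      linear_combination -heq
    have hzpos : 0 < Lz (2*m)*x - (y:ℤ) := by
      by_contra hc
      push_neg at hc
      have h1 : (Lz (2*m)*x - (y:ℤ)) * y ≤ 0 :=
        mul_nonpos_of_nonpos_of_nonneg hc (by linarith)
      linarith [hzprod]
    rcases le_or_gt (y:ℤ) (Lz (2*m)*x - y) with hcase | hcase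
    · -- terminal case
      have hw : (Lz (2*m)*x - 2*y)^2 = (Lz (2*m)^2-4)*((x:ℤ)^2-4) := by
        linear_combination 4*heq
      have hF := E3e m
      have hFpos : 0 < Fz (2*m) := by
        unfold Fz; exact_mod_cast Nat.fib_pos.mpr (by omega)
      have hx2 : (2:ℤ) ≤ x := by
        by_contra hc
        push_neg at hc
        have hxeq : (x:ℤ) = 1 := by linarith
        rw [hxeq] at hw
        nlinarith [sq_nonneg (Lz (2*m)*(1:ℤ)-2*y)]
      have hwnn : 0 ≤ Lz (2*m)*(x:ℤ) - 2*y := by linarith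
      have hw5 : (Lz (2*m)*(x:ℤ) - 2*y)^2 = Fz (2*m)^2 * (5*((x:ℤ)^2-4)) := by
        linear_combination hw + ((x:ℤ)^2-4) * hF
      have hFdvd : Fz (2*m) ∣ (Lz (2*m)*(x:ℤ) - 2*y) := by
        have h2 : Fz (2*m)^2 ∣ (Lz (2*m)*(x:ℤ) - 2*y)^2 := ⟨5*((x:ℤ)^2-4), hw5⟩
        exact (Int.pow_dvd_pow_iff two_ne_zero).mp h2
      obtain ⟨t, ht⟩ := hFdvd
      have htnn : 0 ≤ t := by
        by_contra hc
        push_neg at hc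
        have := mul_neg_of_pos_of_neg hFpos hc
        linarith [hwnn, ht]
      have ht2 : t^2 = 5*((x:ℤ)^2-4) := by
        have h3 : Fz (2*m)^2 * t^2 = Fz (2*m)^2 * (5*((x:ℤ)^2-4)) := by
          rw [← mul_pow, ← ht]; exact hw5
        exact mul_left_cancel₀ (pow_ne_zero 2 (ne_of_gt hFpos)) h3
      have h5t : (5:ℤ) ∣ t := by
        have h5 : (5:ℤ) ∣ t^2 := ⟨(x:ℤ)^2-4, ht2⟩
        exact (by norm_num : Prime (5:ℤ)).dvd_of_dvd_pow h5
      obtain ⟨u, hu⟩ := h5t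
      have hunn : 0 ≤ u := by nlinarith [htnn, hu]
      have hxu : (x:ℤ)^2 = 5*u^2 + 4 := by
        have h6 : (5*u)^2 = 5*((x:ℤ)^2 - 4) := by rw [← hu]; exact ht2
        linarith
      have hxu' : (x:ℤ)^2 = 5*((u.toNat : ℕ):ℤ)^2 + 4 := by
        rw [Int.toNat_of_nonneg hunn]; exact hxu
      obtain ⟨k, hk1, hk2⟩ := pell_lucas u.toNat x hxu'
      have hk2' : u = Fz (2*k) := by rw [← Int.toNat_of_nonneg hunn]; exact hk2
      -- 2y = Lz(2m) * Lz(2k) - 5 * Fz(2m) * Fz(2k)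
      have hyval : 2*(y:ℤ) = Lz (2*m) * Lz (2*k) - 5 * Fz (2*m) * Fz (2*k) := by
        have : Lz (2*m)*(x:ℤ) - 2*y = Fz (2*m) * (5 * Fz (2*k)) := by
          rw [ht, hu, hk2']
        rw [hk1] at this
        linarith
      rcases le_or_gt k m with hkm | hkm
      · have hE := E5e (2*m - 2*k) k
        rw [show 2*m - 2*k + 2*k = 2*m from by omega] at hE
        have hyL : (y:ℤ) = Lz (2*m - 2*k) := by linarith [hyval, hE]
        have hxn : x = lucasNum (2*k) := by exact Lz_cast_inj hk1
        have hyn : y = lucasNum (2*(m-k)) := by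
          rw [show 2*(m-k) = 2*m - 2*k from by omega]; exact Lz_cast_inj hyL
        have h2k : 2*k ≤ m := by
          have hle : lucasNum (2*k) ≤ lucasNum (2*(m-k)) := by omega
          have := luc_even_le hle
          omega
        exact Or.inr ⟨k, h2k, hk1, hyL⟩
      · exfalso
        have hE := E5e (2*k - 2*m) m
        rw [show 2*k - 2*m + 2*m = 2*k from by omega] at hE
        have hyL : (y:ℤ) = Lz (2*k - 2*m) := by linarith [hyval, hE]
        -- x ≤ y : lucasNum (2k) ≤ lucasNum (2(k-m)) ⇒ k ≤ k - m, contra m ≥ 1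
        have hxn : x = lucasNum (2*k) := by exact Lz_cast_inj hk1
        have hyn : y = lucasNum (2*(k-m)) := by
          rw [show 2*(k-m) = 2*k - 2*m from by omega]; exact Lz_cast_inj hyL
        have hle : lucasNum (2*k) ≤ lucasNum (2*(k-m)) := by omega
        have := luc_even_le hle
        omega
    · -- descent case
      have hxlty : x < y := by
        rcases eq_or_lt_of_le hxy with he | h
        · exfalso
          have hxz : (x:ℤ) = y := by exact_mod_cast he
          rw [← hxz] at hcase
          nlinarith [hcase, hx1, hL3]
        · exact h
      obtain ⟨zn, hzn⟩ : ∃ zn : ℕ, (zn:ℤ) = Lz (2*m)*(x:ℤ) - y :=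
        ⟨(Lz (2*m)*(x:ℤ) - y).toNat, Int.toNat_of_nonneg (le_of_lt hzpos)⟩
      have hznpos : 0 < zn := by
        have : (0:ℤ) < (zn:ℤ) := by rw [hzn]; exact hzpos
        exact_mod_cast this
      have hznlty : zn < y := by
        have : (zn:ℤ) < (y:ℤ) := by rw [hzn]; exact hcase
        exact_mod_cast this
      have heq2 : (zn:ℤ)^2 + (x:ℤ)^2 - Lz (2*m) * zn * x + Lz (2*m)^2 - 4 = 0 := by
        rw [hzn]; linear_combination heq
      rcases le_or_gt zn x with hzx | hzx
      · have hres := IH x hxlty zn hznpos hzx heq2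
        have hyeq : (y:ℤ) = Lz (2*m) * x - zn := by rw [hzn]; ring
        rcases hres with ⟨k, ha1, ha2⟩ | ⟨k, hk, ha1, ha2⟩
        · left
          refine ⟨k+m, ?_, ?_⟩
          · rw [show 2*(k+m) = 2*k+2*m from by ring]; exact ha2
          · have hE := E4e (2*k) m
            rw [show 2*(k+m)+2*m = 2*k + 4*m from by ring]
            rw [hyeq, ha1, ha2]
            linear_combination hE
        · left
          have hkm : k ≤ m := by omega
          refine ⟨m - k, ?_, ?_⟩
          · rw [show 2*(m-k) = 2*m - 2*k from by omega]; exact ha2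
          · have hE := E4e (2*k) (m-k)
            rw [show 2*k + 2*(m-k) = 2*m from by omega,
                show 2*(m-k) = 2*m - 2*k from by omega,
                show 2*k + 4*(m-k) = 2*(m-k) + 2*m + (2*m - 2*k) - (2*m - 2*k) from by omega] at hE
            rw [show 2*(m-k)+2*m + (2*m-2*k) - (2*m-2*k) = 2*(m-k)+2*m from by omega] at hE
            rw [hyeq, ha1, ha2]
            linear_combination hE
      · have heq2' : (x:ℤ)^2 + (zn:ℤ)^2 - Lz (2*m) * x * zn + Lz (2*m)^2 - 4 = 0 := by
          linear_combination heq2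
        have hres := IH zn hznlty x hx (le_of_lt hzx) heq2'
        have hyeq : (y:ℤ) = Lz (2*m) * x - zn := by rw [hzn]; ring
        rcases hres with ⟨k, ha1, ha2⟩ | ⟨k, hk, ha1, ha2⟩
        · -- x = L_{2k}, zn = L_{2k+2m}
          rcases le_or_gt k m with hkm | hkm
          · -- y = Lz (2m - 2k), descending
            have hE := E4e (2*m - 2*k) k
            rw [show 2*m - 2*k + 2*k = 2*m from by omega,
                show 2*m - 2*k + 4*k = 2*k + 2*m from by omega] at hE
            have hyL : (y:ℤ) = Lz (2*m - 2*k) := by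
              rw [hyeq, ha1, ha2]; linear_combination hE
            have hxn : x = lucasNum (2*k) := by exact Lz_cast_inj ha1
            have hyn : y = lucasNum (2*(m-k)) := by
              rw [show 2*(m-k) = 2*m - 2*k from by omega]; exact Lz_cast_inj hyL
            have h2k : 2*k ≤ m := by
              have hle : lucasNum (2*k) ≤ lucasNum (2*(m-k)) := by omega
              have := luc_even_le hle
              omega
            exact Or.inr ⟨k, h2k, ha1, hyL⟩
          · exfalso
            have hE := E4e (2*k - 2*m) m
            rw [show 2*k - 2*m + 2*m = 2*k from by omega,
                show 2*k - 2*m + 4*m = 2*k + 2*m from by omega] at hE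
            have hyL : (y:ℤ) = Lz (2*k - 2*m) := by
              rw [hyeq, ha1, ha2]; linear_combination hE
            -- zn < y : lucasNum (2k+2m) < lucasNum (2(k-m)) impossible
            have hznn2 : zn = lucasNum (2*(k+m)) := by
              rw [show 2*(k+m) = 2*k+2*m from by ring]; exact Lz_cast_inj ha2
            have hyn : y = lucasNum (2*(k-m)) := by
              rw [show 2*(k-m) = 2*k - 2*m from by omega]; exact Lz_cast_inj hyL
            have hle : lucasNum (2*(k+m)) ≤ lucasNum (2*(k-m)) := by omega
            have := luc_even_le hle
            omega
        · -- x = L_{2k}, zn = L_{2m-2k}, 2k ≤ m : y = L_{2k+2m}, ascending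
          left
          have hkm : k ≤ m := by omega
          refine ⟨k, ha1, ?_⟩
          have hE := E4e (2*m - 2*k) k
          rw [show 2*m - 2*k + 2*k = 2*m from by omega,
              show 2*m - 2*k + 4*k = 2*k + 2*m from by omega] at hE
          rw [hyeq, ha1, ha2]
          linear_combination hE

lemma sigma_two_prime {p : ℕ} (hp : p.Prime) :
    (ArithmeticFunction.sigma 2) p = 1 + p^2 := by
  rw [ArithmeticFunction.sigma_apply, hp.divisors,
    Finset.sum_pair (Nat.ne_of_lt hp.one_lt)]
  norm_num

lemma sigma_two_prime_sq {p : ℕ} (hp : p.Prime) :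
    (ArithmeticFunction.sigma 2) (p^2) = 1 + p^2 + p^4 := by
  rw [ArithmeticFunction.sigma_apply, Nat.divisors_prime_pow hp, Finset.sum_map]
  simp [Finset.sum_range_succ]
  ring

lemma sigma_two_ge {n a : ℕ} (hn : 0 < n) (ha : a ∣ n) (hane : a ≠ n) :
    a^2 + n^2 ≤ (ArithmeticFunction.sigma 2) n := by
  rw [ArithmeticFunction.sigma_apply]
  have hsub : ({a, n} : Finset ℕ) ⊆ n.divisors := by
    intro d hd
    simp only [Finset.mem_insert, Finset.mem_singleton] at hd
    rcases hd with h | h <;> subst h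
    · exact Nat.mem_divisors.mpr ⟨ha, hn.ne'⟩
    · exact Nat.mem_divisors.mpr ⟨dvd_rfl, hn.ne'⟩
  calc a^2 + n^2 = ∑ d ∈ ({a, n} : Finset ℕ), d^2 := (Finset.sum_pair (f := fun d => d^2) hane).symm
    _ ≤ ∑ d ∈ n.divisors, d^2 := Finset.sum_le_sum_of_subset hsub

theorem stmt_16 (m : ℕ) (hm : 1 ≤ m) (n : ℕ) (hn : 0 < n)
    (hbig : (n : ℤ) > ((lucasNum (2 * m) : ℤ) + (lucasNum (2 * m) : ℤ) ^ 2 - 5) ^ 3)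
    (heq : ((ArithmeticFunction.sigma 2) n : ℤ) - (n : ℤ) ^ 2 =
      (lucasNum (2 * m) : ℤ) * n - (lucasNum (2 * m) : ℤ) ^ 2 + 5) :
    (∃ k : ℕ, n = lucasNum (2 * k) * lucasNum (2 * k + 2 * m) ∧
      (lucasNum (2 * k)).Prime ∧ (lucasNum (2 * k + 2 * m)).Prime) ∨
    (∃ k : ℕ, k < m ∧ m ≠ 2 * k ∧
      n = lucasNum (2 * k) * lucasNum (2 * m - 2 * k) ∧
      (lucasNum (2 * k)).Prime ∧ (lucasNum (2 * m - 2 * k)).Prime) := by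
  have hL3 : (3:ℤ) ≤ (lucasNum (2*m) : ℤ) := by exact_mod_cast lucas_even_ge3 hm
  have hLpos : (0:ℤ) < (lucasNum (2*m):ℤ) := by linarith
  have hnL3 : ((lucasNum (2*m):ℤ))^3 < n := by
    have h1 : (lucasNum (2*m):ℤ) ≤ (lucasNum (2*m):ℤ) + (lucasNum (2*m):ℤ)^2 - 5 := by
      nlinarith
    have h2 := pow_le_pow_left₀ (by linarith : (0:ℤ) ≤ (lucasNum (2*m):ℤ)) h1 3
    linarith [hbig]
  have hn2 : 1 < n := by
    have h27 : (27:ℤ) ≤ ((lucasNum (2*m):ℤ))^3 := by nlinarith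
    have : (1:ℤ) < (n:ℤ) := by linarith
    exact_mod_cast this
  have hp : n.minFac.Prime := Nat.minFac_prime (by omega)
  obtain ⟨a, han⟩ := Nat.minFac_dvd n
  have hadvd : a ∣ n := ⟨n.minFac, by rw [mul_comm]; exact han⟩
  have ha0 : a ≠ 0 := by rintro rfl; rw [mul_zero] at han; omega
  have h2p : 2 ≤ n.minFac := hp.two_le
  have halt : a < n := by
    calc a < 2*a := by omega
      _ ≤ n.minFac * a := Nat.mul_le_mul_right a h2p
      _ = n := han.symm
  by_cases ha1 : a = 1
  · exfalso
    have hnp : n.Prime := by rw [han, ha1, mul_one]; exact hp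
    have hs := sigma_two_prime hnp
    rw [hs] at heq
    push_cast at heq
    nlinarith [hnL3, hL3, mul_lt_mul_of_pos_left hnL3 hLpos, heq]
  by_cases hap : a.Prime
  · by_cases hpa : n.minFac = a
    · exfalso
      rw [hpa] at han
      have hnsq : n = a^2 := by rw [han]; ring
      have hs2 : (ArithmeticFunction.sigma 2) n = 1 + a^2 + a^4 := by
        rw [hnsq]; exact sigma_two_prime_sq hap
      rw [hs2] at heq
      push_cast at heq
      have hnn : (n:ℤ) = (a:ℤ)^2 := by exact_mod_cast hnsq
      have h44 : (n:ℤ)^2 = (a:ℤ)^4 := by rw [hnn]; ring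
      have e := mul_lt_mul_of_pos_right hnL3
        (by linarith : (0:ℤ) < (lucasNum (2*m):ℤ) - 1)
      nlinarith [heq, h44, hnn, e, hL3, sq_nonneg ((lucasNum (2*m):ℤ) - 3),
        mul_pos hLpos hLpos]
    · -- main case: n = p * a with p ≠ a both prime
      have hcop : Nat.Coprime n.minFac a := (Nat.coprime_primes hp hap).mpr hpa
      have hs : (ArithmeticFunction.sigma 2) n = (1 + n.minFac^2) * (1 + a^2) := by
        have hs0 : (ArithmeticFunction.sigma 2) (n.minFac * a)
            = (1 + n.minFac^2) * (1 + a^2) := by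
          rw [ArithmeticFunction.isMultiplicative_sigma.map_mul_of_coprime hcop,
              sigma_two_prime hp, sigma_two_prime hap]
        rw [← han] at hs0
        exact hs0
      rw [hs] at heq
      have hnc : (n:ℤ) = (n.minFac:ℤ) * a := by exact_mod_cast han
      rw [hnc] at heq
      push_cast at heq
      have hkey : ((n.minFac:ℕ):ℤ)^2 + ((a:ℕ):ℤ)^2 - Lz (2*m) * (n.minFac:ℤ) * a
          + Lz (2*m)^2 - 4 = 0 := by
        unfold Lz
        linear_combination heq
      have hple : n.minFac ≤ a := Nat.minFac_le_of_dvd hap.two_le hadvd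
      have hres := descent m hm a n.minFac hp.pos hple hkey
      rcases hres with ⟨k, hk1, hk2⟩ | ⟨k, h2k, hk1, hk2⟩
      · left
        have e1 : n.minFac = lucasNum (2*k) := Lz_cast_inj hk1
        have e2 : a = lucasNum (2*k + 2*m) := Lz_cast_inj hk2
        exact ⟨k, by rw [han, e1, e2], by rw [← e1]; exact hp, by rw [← e2]; exact hap⟩
      · right
        have e1 : n.minFac = lucasNum (2*k) := Lz_cast_inj hk1
        have e2 : a = lucasNum (2*m - 2*k) := Lz_cast_inj hk2
        have hm2k : m ≠ 2*k := by
          intro h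
          apply hpa
          rw [e1, e2]
          congr 1
          omega
        exact ⟨k, by omega, hm2k, by rw [han, e1, e2], by rw [← e1]; exact hp,
          by rw [← e2]; exact hap⟩
  · exfalso
    have ha2 : 2 ≤ a := by omega
    have hb : a.minFac.Prime := Nat.minFac_prime (by omega)
    have hbdvd : a.minFac ∣ n := dvd_trans (Nat.minFac_dvd a) hadvd
    have hpb : n.minFac ≤ a.minFac := Nat.minFac_le_of_dvd hb.two_le hbdvd
    obtain ⟨c, hac⟩ := Nat.minFac_dvd a
    have hc1 : c ≠ 1 := by
      rintro rfl
      rw [mul_one] at hac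
      exact hap (hac ▸ hb)
    have hc0 : c ≠ 0 := by rintro rfl; rw [mul_zero] at hac; omega
    have hcdvd : c ∣ n := dvd_trans ⟨a.minFac, by rw [mul_comm]; exact hac⟩ hadvd
    have hpc : n.minFac ≤ c := Nat.minFac_le_of_dvd (by omega) hcdvd
    have hpsq : n.minFac * n.minFac ≤ a := by
      rw [hac]; exact Nat.mul_le_mul hpb hpc
    have hna : n^2 ≤ a^3 := by
      have h1 : n^2 = (n.minFac * a)^2 := congrArg (fun t => t^2) han
      calc n^2 = (n.minFac * n.minFac) * (a * a) := by rw [h1]; ring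
        _ ≤ a * (a * a) := Nat.mul_le_mul_right _ hpsq
        _ = a^3 := by ring
    have hane : a ≠ n := by omega
    have hsge := sigma_two_ge hn hadvd hane
    have hsgeZ : (a:ℤ)^2 + (n:ℤ)^2 ≤ ((ArithmeticFunction.sigma 2) n : ℤ) := by
      exact_mod_cast hsge
    have hub : (a:ℤ)^2 ≤ (lucasNum (2*m):ℤ)*n - (lucasNum (2*m):ℤ)^2 + 5 := by
      linarith [heq, hsgeZ]
    have hnaZ : ((n:ℤ))^2 ≤ (a:ℤ)^3 := by exact_mod_cast hna
    have hge : (lucasNum (2*m):ℤ) * n ≤ (a:ℤ)^2 := by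
      by_contra hc
      push_neg at hc
      have e1 : ((a:ℤ)^2)^3 < ((lucasNum (2*m):ℤ)*n)^3 :=
        pow_lt_pow_left₀ hc (sq_nonneg _) (by norm_num)
      have e3 : (lucasNum (2*m):ℤ)^3 * (n:ℤ)^3 < (n:ℤ) * (n:ℤ)^3 := by
        apply mul_lt_mul_of_pos_right hnL3
        have : (0:ℤ) < (n:ℤ) := by exact_mod_cast hn
        positivity
      have e4 : ((n:ℤ)^2)^2 ≤ ((a:ℤ)^3)^2 :=
        pow_le_pow_left₀ (by positivity) hnaZ 2
      have e2 : ((lucasNum (2*m):ℤ)*n)^3 = (lucasNum (2*m):ℤ)^3 * (n:ℤ)^3 := by ring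
      linarith [e1, e3, e4, e2]
    nlinarith [hub, hge, hL3]
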